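/- Let m ≥ 1 and let G = C₈ᵐ × C₂ with generators a₁,…,a_m of the order-8 factors and h of the order-2 factor. In 𝔽₂[G], let u_m = ∏_{i=1}^{m} (a_i + a_i⁴ + a_i⁷) and u = 1 + h·u_m. Then the 𝔽₂-linear endomorphism of 𝔽₂[G] given by multiplication by u has range of dimension (3/2)·8ᵐ = 3·8ᵐ/2, and the endomorphism given by multiplication by u³ has range of dimension 8ᵐ/2. -/

import Mathlib

noncomputable section

open MonoidAlgebra

/-- The code generated by `u` in a group algebra: the `R`-span of `{g • u : g ∈ G}`. -/
def codeGen {R : Type*} [CommSemiring R] {G : Type*} [Monoid G]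
    (u : MonoidAlgebra R G) : Submodule R (MonoidAlgebra R G) :=
  Submodule.span R (Set.range fun g : G => MonoidAlgebra.of R G g * u)

/-- The weight (support size) of an element of a group algebra. -/
def wt {R : Type*} [Semiring R] {G : Type*} (x : MonoidAlgebra R G) : ℕ :=
  x.coeff.support.card

/-- The minimum distance of the code generated by `u`: the least weight of a nonzero
element of the code. -/
def minDist {R : Type*} [CommSemiring R] {G : Type*} [Monoid G]
    (u : MonoidAlgebra R G) : ℕ :=
  sInf {n | ∃ x ∈ codeGen u, x ≠ 0 ∧ wt x = n}

/-- The group `C₈ᵐ × C₂`, written multiplicatively. -/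
abbrev Gp (m : ℕ) : Type := Multiplicative ((Fin m → ZMod 8) × ZMod 2)

/-- The generator `aᵢ` of the `i`-th copy of `C₈`. -/
def agen (m : ℕ) (i : Fin m) : Gp m := Multiplicative.ofAdd (Pi.single i 1, 0)

/-- The generator `h` of the `C₂` factor. -/
def hgen (m : ℕ) : Gp m := Multiplicative.ofAdd (0, 1)

/-- `u_m = ∏ᵢ (aᵢ + aᵢ⁴ + aᵢ⁷)` in `𝔽₂[C₈ᵐ × C₂]`. -/
def um (m : ℕ) : MonoidAlgebra (ZMod 2) (Gp m) :=
  ∏ i : Fin m,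
    (of (ZMod 2) (Gp m) (agen m i) + of (ZMod 2) (Gp m) (agen m i) ^ 4 +
      of (ZMod 2) (Gp m) (agen m i) ^ 7)

/-- `u = 1 + h·u_m`. -/
def uu (m : ℕ) : MonoidAlgebra (ZMod 2) (Gp m) :=
  1 + of (ZMod 2) (Gp m) (hgen m) * um m

/-!
In characteristic 2, `h² = 1` and `(a + a⁴ + a⁷)⁴ = a⁴ + 1 + a⁴ = 1` give `u² = 1 + u_m²` and
`u⁴ = 0`. For an endomorphism `f` with `f⁴ = 0` the rank drops `rk fᵏ - rk fᵏ⁺¹` do not increase,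
so `rk f ≥ 3 rk f³`, while `rk f + rk f³ ≤ n` because `range f³ ⊆ ker f`. Hence `rk u³ ≥ n / 4`
forces `rk u³ = n / 4` and `rk u = 3n / 4`, where `n = 2 · 8ᵐ`.

For the lower bound, multiplication by `u³ = (1 + u_m²)(1 + h u_m)` is injective on the span of
the `8ᵐ / 2` group elements `(x, 0)` with `x₀ ∈ {0, 1, 2, 3}`. Splitting by the `C₂`-coordinate
reduces `y u³ = 0` to `(1 + u_m²) y = 0`. Writing `u_m² = e₀ c` with `e₀ = 1 + a₀² + a₀⁶`,
`c² = 1` and `c` free of `a₀`, this becomes `(1 + c) y + a₀² y + a₀⁶ y = 0`, and comparing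
coefficients just outside the range `{0, 1, 2, 3}` of the `a₀`-exponent kills `y`.
-/

open Module LinearMap Multiplicative
open scoped Pointwise

namespace LinearMap

variable {K V W : Type*} [Field K] [AddCommGroup V] [Module K V] [FiniteDimensional K V]
  [AddCommGroup W] [Module K W]

theorem finrank_map_add_finrank_inf_ker (f : V →ₗ[K] W) (p : Submodule K V) :
    finrank K (p.map f) + finrank K ↥(p ⊓ ker f) = finrank K p := by
  rw [← range_domRestrict, ← Submodule.map_comap_subtype, Submodule.finrank_map_subtype_eq,
    ← ker_domRestrict]
  exact finrank_range_add_finrank_ker _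

theorem finrank_le_finrank_range_of_disjoint_ker (f : V →ₗ[K] W) {p : Submodule K V}
    (hp : Disjoint p (ker f)) : finrank K p ≤ finrank K (range f) := by
  have h := finrank_map_add_finrank_inf_ker f p
  rw [hp.eq_bot, finrank_bot, add_zero] at h
  exact h ▸ Submodule.finrank_mono map_le_range

theorem two_mul_finrank_range_pow_succ_le (f : Module.End K V) (k : ℕ) :
    2 * finrank K (range (f ^ (k + 1))) ≤
      finrank K (range (f ^ k)) + finrank K (range (f ^ (k + 2))) := by
  have hmap (j : ℕ) : range (f ^ (j + 1)) = (range (f ^ j)).map f := by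
    rw [pow_succ', Module.End.mul_eq_comp, range_comp]
  have hle : range (f ^ (k + 1)) ≤ range (f ^ k) := by
    rw [pow_succ, Module.End.mul_eq_comp]
    exact range_comp_le_range _ _
  have h₀ := finrank_map_add_finrank_inf_ker f (range (f ^ k))
  have h₁ := finrank_map_add_finrank_inf_ker f (range (f ^ (k + 1)))
  have hmono := Submodule.finrank_mono (inf_le_inf_right (ker f) hle)
  rw [← hmap] at h₀ h₁
  show _ ≤ _ + finrank K (range (f ^ (k + 1 + 1)))
  omega

/-- The Jordan blocks of such an `f` all have size `4`. -/
theorem finrank_range_of_pow_four_eq_zero (f : Module.End K V) (hf : f ^ 4 = 0)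
    (h : finrank K V ≤ 4 * finrank K (range (f ^ 3))) :
    4 * finrank K (range f) = 3 * finrank K V ∧
      4 * finrank K (range (f ^ 3)) = finrank K V := by
  have h₁ : 2 * finrank K (range (f ^ 2)) ≤
      finrank K (range (f ^ 1)) + finrank K (range (f ^ 3)) :=
    two_mul_finrank_range_pow_succ_le f 1
  have h₂ : 2 * finrank K (range (f ^ 3)) ≤
      finrank K (range (f ^ 2)) + finrank K (range (f ^ 4)) :=
    two_mul_finrank_range_pow_succ_le f 2
  rw [pow_one] at h₁
  rw [hf, range_zero, finrank_bot] at h₂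
  have hker : range (f ^ 3) ≤ ker f := by
    rintro _ ⟨x, rfl⟩
    rw [mem_ker, ← Module.End.mul_apply, ← pow_succ', hf, zero_apply]
  have h₃ := Submodule.finrank_mono hker
  have h₄ := finrank_range_add_finrank_ker f
  omega

end LinearMap

section CharTwo

variable {R : Type*} [CommRing R] [CharP R 2]

theorem one_add_mul_pow_four_eq_zero {h v : R} (hh : h ^ 2 = 1) (hv : v ^ 4 = 1) :
    (1 + h * v) ^ 4 = 0 := by
  calc (1 + h * v) ^ 4 = ((1 + h * v) ^ 2) ^ 2 := by ring
    _ = 1 + (h ^ 2) ^ 2 * v ^ 4 := by rw [CharTwo.add_sq, CharTwo.add_sq]; ring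
    _ = 0 := by rw [hh, hv, one_pow, one_mul, CharTwo.add_self_eq_zero]

theorem one_add_mul_pow_three {h v : R} (hh : h ^ 2 = 1) :
    (1 + h * v) ^ 3 = (1 + v ^ 2) * (1 + h * v) := by
  rw [pow_succ, CharTwo.add_sq, mul_pow, hh, one_pow, one_mul]

theorem add_pow_four_add_pow_seven_sq {a : R} (ha : a ^ 8 = 1) :
    (a + a ^ 4 + a ^ 7) ^ 2 = 1 + a ^ 2 + a ^ 6 := by
  rw [CharTwo.add_sq, CharTwo.add_sq]
  linear_combination (1 + a ^ 6) * ha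

theorem one_add_sq_add_pow_six_sq {a : R} (ha : a ^ 8 = 1) : (1 + a ^ 2 + a ^ 6) ^ 2 = 1 := by
  rw [CharTwo.add_sq, CharTwo.add_sq]
  linear_combination a ^ 4 * ha + a ^ 4 * CharTwo.two_eq_zero (R := R)

end CharTwo

namespace MonoidAlgebra

variable {k G : Type*}

instance [CommRing k] [Monoid G] (p : ℕ) [CharP k p] : CharP k[G] p :=
  charP_of_injective_algebraMap' k p

theorem mul_mem_supported_mul [Semiring k] [Mul G] {s t : Set G} {x y : k[G]}
    (hx : x ∈ supported k k s) (hy : y ∈ supported k k t) : x * y ∈ supported k k (s * t) := by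
  classical
  rw [mem_supported] at *
  exact (Finset.coe_subset.2 (support_coeff_mul_subset x y)).trans
    (Finset.coe_mul x.coeff.support y.coeff.support ▸ Set.mul_subset_mul hx hy)

theorem finrank_supported_range [Field k] {ι : Type*} [Fintype ι] {f : ι → G}
    (hf : Function.Injective f) : finrank k (supported k k (Set.range f)) = Fintype.card ι := by
  classical
  rw [(supportedEquivFinsupp (Set.range f)).finrank_eq, finrank_finsupp_self,
    Set.card_range_of_injective hf]

def supportedSubalgebra [CommSemiring k] [Monoid G] (S : Submonoid G) : Subalgebra k k[G] :=
  (supported k k (S : Set G)).toSubalgebra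
    (mem_supported.2 <| (Finset.coe_subset.2 support_coeff_one_subset).trans (by simp))
    fun _ _ hx hy => S.coe_mul_self_eq ▸ mul_mem_supported_mul hx hy

theorem mem_supportedSubalgebra [CommSemiring k] [Monoid G] {S : Submonoid G} {x : k[G]} :
    x ∈ supportedSubalgebra S ↔ x ∈ supported k k (S : Set G) := Iff.rfl

theorem of_mem_supportedSubalgebra [CommSemiring k] [Monoid G] {S : Submonoid G} {g : G}
    (hg : g ∈ S) : of k G g ∈ supportedSubalgebra S := by
  rw [mem_supportedSubalgebra, mem_supported, of_apply]
  exact (Finset.coe_subset.2 Finsupp.support_single_subset).trans (by simpa using hg)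

theorem eq_zero_of_add_of_mul_eq_zero [Semiring k] [Group G] {H : Subgroup G} {h : G}
    (hh : h ∉ H) {x y : k[G]} (hx : x ∈ supported k k (H : Set G))
    (hy : y ∈ supported k k (H : Set G)) (hxy : x + of k G h * y = 0) : x = 0 := by
  rw [mem_supported'] at hx hy
  ext g
  by_cases hg : g ∈ H
  · have hhg : h⁻¹ * g ∉ H := fun hm => hh (by simpa using H.mul_mem hg (H.inv_mem hm))
    simpa [of_apply, coeff_single_mul_apply, hy _ hhg] using congr(($hxy).coeff g)
  · exact hx g hg

end MonoidAlgebra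

section GroupAlgebra

variable {m : ℕ}

theorem agen_pow_eight (i : Fin m) : agen m i ^ 8 = 1 := by
  apply toAdd.injective
  ext j <;> simp [agen, Pi.single_apply]
  exact fun _ => rfl

theorem hgen_sq : hgen m ^ 2 = 1 := by
  apply toAdd.injective
  ext <;> simp [hgen]
  rfl

def baseSubgroup (m : ℕ) : Subgroup (Gp m) :=
  (AddMonoidHom.snd (Fin m → ZMod 8) (ZMod 2)).toMultiplicative.ker

theorem mem_baseSubgroup {g : Gp m} : g ∈ baseSubgroup m ↔ (toAdd g).2 = 0 := Iff.rfl

def coordKer (m : ℕ) (i : Fin m) : Subgroup (Gp m) :=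
  ((Pi.evalAddMonoidHom (fun _ : Fin m => ZMod 8) i).comp
    (AddMonoidHom.fst (Fin m → ZMod 8) (ZMod 2))).toMultiplicative.ker

theorem mem_coordKer {i : Fin m} {g : Gp m} : g ∈ coordKer m i ↔ (toAdd g).1 i = 0 := Iff.rfl

def lowHalf (m : ℕ) (i : Fin m) : Set (Gp m) := {g | ((toAdd g).1 i).val < 4}

theorem coordKer_mul_lowHalf_subset (i : Fin m) :
    (coordKer m i : Set (Gp m)) * lowHalf m i ⊆ lowHalf m i := by
  rintro _ ⟨g, hg, g', hg', rfl⟩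
  simpa [lowHalf, mem_coordKer.1 hg] using hg'

def umFactorSq (m : ℕ) (i : Fin m) : (ZMod 2)[Gp m] :=
  1 + of (ZMod 2) (Gp m) (agen m i) ^ 2 + of (ZMod 2) (Gp m) (agen m i) ^ 6

theorem of_agen_pow_eight (i : Fin m) : of (ZMod 2) (Gp m) (agen m i) ^ 8 = 1 := by
  rw [← map_pow, agen_pow_eight, map_one]

theorem of_hgen_sq : of (ZMod 2) (Gp m) (hgen m) ^ 2 = 1 := by
  rw [← map_pow, hgen_sq, map_one]

theorem um_sq : um m ^ 2 = ∏ i, umFactorSq m i := by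
  rw [um, ← Finset.prod_pow]
  exact Finset.prod_congr rfl fun i _ => add_pow_four_add_pow_seven_sq (of_agen_pow_eight i)

theorem prod_umFactorSq_sq (s : Finset (Fin m)) : (∏ i ∈ s, umFactorSq m i) ^ 2 = 1 := by
  rw [← Finset.prod_pow]
  exact Finset.prod_eq_one fun i _ => one_add_sq_add_pow_six_sq (of_agen_pow_eight i)

theorem uu_pow_four : uu m ^ 4 = 0 :=
  one_add_mul_pow_four_eq_zero of_hgen_sq <| by
    rw [show 4 = 2 * 2 from rfl, pow_mul, um_sq, prod_umFactorSq_sq]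

theorem uu_pow_three : uu m ^ 3 = (1 + um m ^ 2) * uu m :=
  one_add_mul_pow_three of_hgen_sq

theorem um_mem_supportedSubalgebra :
    um m ∈ supportedSubalgebra (baseSubgroup m).toSubmonoid := by
  have ha (i : Fin m) :
      of (ZMod 2) (Gp m) (agen m i) ∈ supportedSubalgebra (baseSubgroup m).toSubmonoid :=
    of_mem_supportedSubalgebra (mem_baseSubgroup.2 rfl)
  exact Subalgebra.prod_mem _ fun i _ =>
    add_mem (add_mem (ha i) (pow_mem (ha i) 4)) (pow_mem (ha i) 7)

theorem umFactorSq_mem_supportedSubalgebra {i j : Fin m} (hji : j ≠ i) :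
    umFactorSq m j ∈ supportedSubalgebra (coordKer m i).toSubmonoid := by
  have ha : of (ZMod 2) (Gp m) (agen m j) ∈ supportedSubalgebra (coordKer m i).toSubmonoid :=
    of_mem_supportedSubalgebra (mem_coordKer.2 (by simp [agen, hji.symm]))
  exact add_mem (add_mem (one_mem _) (pow_mem ha 2)) (pow_mem ha 6)

/-- `y u³ = z + h (u_m z)` with `z = (1 + u_m²) y`, and the two summands live on the two cosets
of `baseSubgroup m`. -/
theorem one_add_um_sq_mul_eq_zero {y : (ZMod 2)[Gp m]}
    (hy : y ∈ supported (ZMod 2) (ZMod 2) (baseSubgroup m : Set (Gp m)))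
    (h : y * uu m ^ 3 = 0) : (1 + um m ^ 2) * y = 0 := by
  have hv := um_mem_supportedSubalgebra (m := m)
  have hz : (1 + um m ^ 2) * y ∈ supportedSubalgebra (baseSubgroup m).toSubmonoid :=
    mul_mem (add_mem (one_mem _) (pow_mem hv 2)) (mem_supportedSubalgebra.2 hy)
  refine eq_zero_of_add_of_mul_eq_zero (h := hgen m) (fun hh => ?_) hz
    (mem_supportedSubalgebra.1 (mul_mem hv hz)) ?_
  · exact one_ne_zero (mem_baseSubgroup.1 hh)
  · rw [← h, uu_pow_three, uu]
    ring

/-- Multiplication by `aᵢ²` and `aᵢ⁶` shifts the `i`-th coordinate by `2` and `-2`; at a point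
just outside `lowHalf m i`, only one of the three summands can have a nonzero coefficient. -/
theorem eq_zero_of_add_shift_two_add_shift_six_eq_zero {i : Fin m} {x y : (ZMod 2)[Gp m]}
    (hx : x ∈ supported (ZMod 2) (ZMod 2) (lowHalf m i))
    (hy : y ∈ supported (ZMod 2) (ZMod 2) (lowHalf m i))
    (h : x + of (ZMod 2) (Gp m) (agen m i) ^ 2 * y + of (ZMod 2) (Gp m) (agen m i) ^ 6 * y = 0) :
    y = 0 := by
  have hcoeff (g : Gp m) :
      x.coeff g + y.coeff ((agen m i ^ 2)⁻¹ * g) + y.coeff ((agen m i ^ 6)⁻¹ * g) = 0 := by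
    simpa [← map_pow, of_apply, coeff_single_mul_apply] using congr(($h).coeff g)
  rw [mem_supported'] at hx hy
  ext g
  by_cases hg : g ∈ lowHalf m i
  · have hshift : ∀ t : ZMod 8, t.val < 4 →
        4 ≤ (2 + t).val ∧ 4 ≤ (-6 + (2 + t)).val ∨ 4 ≤ (6 + t).val ∧ 4 ≤ (-2 + (6 + t)).val := by
      decide
    obtain ⟨h₁, h₂⟩ | ⟨h₁, h₂⟩ := hshift _ hg
    · have hx' := hx (agen m i ^ 2 * g) (by simpa [lowHalf, agen] using h₁)
      have hy' := hy ((agen m i ^ 6)⁻¹ * (agen m i ^ 2 * g)) (by simpa [lowHalf, agen] using h₂)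
      have := hcoeff (agen m i ^ 2 * g)
      rwa [hx', hy', inv_mul_cancel_left, zero_add, add_zero] at this
    · have hx' := hx (agen m i ^ 6 * g) (by simpa [lowHalf, agen] using h₁)
      have hy' := hy ((agen m i ^ 2)⁻¹ * (agen m i ^ 6 * g)) (by simpa [lowHalf, agen] using h₂)
      have := hcoeff (agen m i ^ 6 * g)
      rwa [hx', hy', inv_mul_cancel_left, zero_add, zero_add] at this
  · exact hy g hg

theorem eq_zero_of_one_add_um_sq_mul_eq_zero {i : Fin m} {y : (ZMod 2)[Gp m]}
    (hy : y ∈ supported (ZMod 2) (ZMod 2) (lowHalf m i)) (h : (1 + um m ^ 2) * y = 0) :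
    y = 0 := by
  classical
  set c := ∏ j ∈ Finset.univ.erase i, umFactorSq m j
  have hc : um m ^ 2 = umFactorSq m i * c := by
    rw [um_sq, Finset.mul_prod_erase _ _ (Finset.mem_univ i)]
  have hcy : (1 + c) * y ∈ supported (ZMod 2) (ZMod 2) (lowHalf m i) := by
    have hc : 1 + c ∈ supportedSubalgebra (coordKer m i).toSubmonoid :=
      add_mem (one_mem _) <| Subalgebra.prod_mem _ fun j hj =>
        umFactorSq_mem_supportedSubalgebra (Finset.ne_of_mem_erase hj)
    exact supported_mono (coordKer_mul_lowHalf_subset i) (mul_mem_supported_mul hc hy)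
  refine eq_zero_of_add_shift_two_add_shift_six_eq_zero hcy hy ?_
  have he : umFactorSq m i =
      1 + of (ZMod 2) (Gp m) (agen m i) ^ 2 + of (ZMod 2) (Gp m) (agen m i) ^ 6 := rfl
  rw [hc] at h
  linear_combination c * h - umFactorSq m i * y * prod_umFactorSq_sq (Finset.univ.erase i) -
    y * he

def lowQuarter (m : ℕ) (p : Fin 4 × (Fin m → ZMod 8)) : Gp (m + 1) :=
  ofAdd (Fin.cons ((p.1 : ℕ) : ZMod 8) p.2, 0)

theorem lowQuarter_injective : Function.Injective (lowQuarter m) := by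
  have hcast : Function.Injective fun s : Fin 4 => ((s : ℕ) : ZMod 8) := by decide
  rintro ⟨s, x⟩ ⟨t, x'⟩ h
  have h' : (Fin.cons ((s : ℕ) : ZMod 8) x : Fin (m + 1) → ZMod 8) =
      Fin.cons ((t : ℕ) : ZMod 8) x' :=
    congrArg (fun g => (toAdd g).1) h
  obtain ⟨hst, hx⟩ := Fin.cons_injective2 h'
  rw [hcast hst, hx]

theorem range_lowQuarter_subset :
    Set.range (lowQuarter m) ⊆ (baseSubgroup (m + 1) : Set (Gp (m + 1))) ∩ lowHalf (m + 1) 0 := by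
  rintro _ ⟨⟨s, x⟩, rfl⟩
  exact ⟨rfl, (by decide : ∀ s : Fin 4, ((s : ℕ) : ZMod 8).val < 4) s⟩

theorem disjoint_supported_range_lowQuarter_ker :
    Disjoint (supported (ZMod 2) (ZMod 2) (Set.range (lowQuarter m)))
      (ker (mulRight (ZMod 2) (uu (m + 1) ^ 3))) := by
  refine Submodule.disjoint_def.2 fun y hy hker => ?_
  have hy' := supported_mono range_lowQuarter_subset hy
  exact eq_zero_of_one_add_um_sq_mul_eq_zero (supported_mono Set.inter_subset_right hy')
    (one_add_um_sq_mul_eq_zero (supported_mono Set.inter_subset_left hy') hker)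

theorem finrank_groupAlgebra_Gp : finrank (ZMod 2) (ZMod 2)[Gp m] = 2 * 8 ^ m := by
  rw [finrank_eq_card_basis (basis (Gp m) (ZMod 2))]
  simp [mul_comm]

end GroupAlgebra

theorem rank_of_u_and_u_cubed (m : ℕ) (hm : 1 ≤ m) :
    Module.finrank (ZMod 2)
        (LinearMap.range (LinearMap.mulRight (ZMod 2) (uu m))) = 3 * 8 ^ m / 2 ∧
      Module.finrank (ZMod 2)
        (LinearMap.range (LinearMap.mulRight (ZMod 2) (uu m ^ 3))) = 8 ^ m / 2 := by
  obtain ⟨m, rfl⟩ : ∃ k, m = k + 1 := ⟨m - 1, by omega⟩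
  have hpow := pow_mulRight (ZMod 2) _ (uu (m + 1))
  have hlow := finrank_le_finrank_range_of_disjoint_ker _
    (disjoint_supported_range_lowQuarter_ker (m := m))
  have hcard : Fintype.card (Fin 4 × (Fin m → ZMod 8)) = 4 * 8 ^ m := by simp
  rw [finrank_supported_range lowQuarter_injective, hcard, ← hpow] at hlow
  have hN := finrank_groupAlgebra_Gp (m := m + 1)
  obtain ⟨h₁, h₃⟩ := finrank_range_of_pow_four_eq_zero _
    (by rw [hpow, uu_pow_four, mulRight_zero_eq_zero]) (by rw [hN, pow_succ]; omega)
  rw [← hpow, pow_succ 8 m]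
  rw [hN, pow_succ 8 m] at h₁ h₃
  omega

end
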